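/- For every real α with −1 < α < −1/2 and every x ∈ [0,1]: every real root of the cubic p_x(y) = −2y³ + 3y² − (2+α)y + x(1+α) lies in [0,1], and p_x has at least two distinct real roots if and only if (1+α)·|x − 1/2| ≤ √(−(1+2α)³/108). -/

import Mathlib

/-!
Substituting `y = 1/2 + t` turns `p_x` into `-2 (t³ + a t + b)` with `a = (1 + 2α)/4 < 0` and
`b = -(1 + α)(x - 1/2)/2`. A depressed cubic has two distinct real roots exactly when its
discriminant `-4a³ - 27b²` is nonnegative: two roots `s ≠ t` force the third to be `-(s + t)`, and
the discriminant becomes a square; conversely the sign changes at `±2√(-a/3)` and `±√(-a/3)` locate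
two roots. Roots outside `[0,1]` are excluded because `p_x > 0` on `(-∞, 0)` and
`p_x(1 - y) = -p_{1-x}(y)`.
-/

/-- The 'middle of three' cubic `p_x(y) = −2y³ + 3y² − (2+α)y + x(1+α)`. -/
noncomputable def p (α x y : ℝ) : ℝ :=
  -2 * y ^ 3 + 3 * y ^ 2 - (2 + α) * y + x * (1 + α)

section DepressedCubic

variable {a b : ℝ}

theorem discr_nonneg_of_roots_ne {s t : ℝ} (hst : s ≠ t) (hs : s ^ 3 + a * s + b = 0)
    (ht : t ^ 3 + a * t + b = 0) : 4 * a ^ 3 + 27 * b ^ 2 ≤ 0 := by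
  have ha : a = -(s ^ 2 + s * t + t ^ 2) := by
    have h : (s - t) * (s ^ 2 + s * t + t ^ 2 + a) = 0 := by linear_combination hs - ht
    linear_combination (mul_eq_zero.mp h).resolve_left (sub_ne_zero.mpr hst)
  have hb : b = s * t * (s + t) := by linear_combination hs - s * ha
  have hdisc : 4 * a ^ 3 + 27 * b ^ 2 = -((s - t) * (2 * s + t) * (s + 2 * t)) ^ 2 := by
    rw [ha, hb]; ring
  rw [hdisc]
  exact neg_nonpos.mpr (sq_nonneg _)

theorem exists_roots_ne_of_discr_nonneg (ha : a < 0) (hdisc : 4 * a ^ 3 + 27 * b ^ 2 ≤ 0) :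
    ∃ s t : ℝ, s ≠ t ∧ s ^ 3 + a * s + b = 0 ∧ t ^ 3 + a * t + b = 0 := by
  set f : ℝ → ℝ := fun t ↦ t ^ 3 + a * t + b
  set r := Real.sqrt (-a / 3)
  have hr : 0 < r := Real.sqrt_pos.mpr (by linarith)
  have hr2 : r ^ 2 = -a / 3 := Real.sq_sqrt (by linarith)
  -- `r` is the positive critical point of `f`
  have hb : -(2 * r ^ 3) ≤ b ∧ b ≤ 2 * r ^ 3 := by
    rw [show a = -3 * r ^ 2 by linarith] at hdisc
    exact abs_le_of_sq_le_sq' (by linarith) (by positivity)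
  have hf_neg_two_r : f (-2 * r) = b - 2 * r ^ 3 := by linear_combination (-6 * r) * hr2
  have hf_neg_r : f (-r) = b + 2 * r ^ 3 := by linear_combination (-3 * r) * hr2
  have hf_r : f r = b - 2 * r ^ 3 := by linear_combination (3 * r) * hr2
  have hf_two_r : f (2 * r) = b + 2 * r ^ 3 := by linear_combination (6 * r) * hr2
  have hcont : Continuous f := by fun_prop
  obtain ⟨s, hs, hfs⟩ := intermediate_value_Icc (show -2 * r ≤ -r by linarith) hcont.continuousOn
    (show (0 : ℝ) ∈ Set.Icc (f (-2 * r)) (f (-r)) by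
      rw [hf_neg_two_r, hf_neg_r]; constructor <;> linarith)
  obtain ⟨t, ht, hft⟩ := intermediate_value_Icc (show r ≤ 2 * r by linarith) hcont.continuousOn
    (show (0 : ℝ) ∈ Set.Icc (f r) (f (2 * r)) by
      rw [hf_r, hf_two_r]; constructor <;> linarith)
  exact ⟨s, t, (show s < t by linarith [hs.2, ht.1]).ne, hfs, hft⟩

theorem exists_roots_ne_iff_discr_nonneg (ha : a < 0) :
    (∃ s t : ℝ, s ≠ t ∧ s ^ 3 + a * s + b = 0 ∧ t ^ 3 + a * t + b = 0) ↔
      4 * a ^ 3 + 27 * b ^ 2 ≤ 0 :=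
  ⟨fun ⟨_, _, hst, hs, ht⟩ ↦ discr_nonneg_of_roots_ne hst hs ht,
    exists_roots_ne_of_discr_nonneg ha⟩

end DepressedCubic

section MiddleOfThree

variable {α x y : ℝ}

theorem p_one_sub : p α x (1 - y) = -p α (1 - x) y := by
  unfold p; ring

theorem p_pos_of_neg (hα : -1 ≤ α) (hx : 0 ≤ x) (hy : y < 0) : 0 < p α x y := by
  unfold p
  linarith [pow_pos (neg_pos.mpr hy) 3, sq_nonneg y,
    mul_pos (show 0 < 2 + α by linarith) (neg_pos.mpr hy),
    mul_nonneg hx (show 0 ≤ 1 + α by linarith)]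

theorem mem_Icc_of_p_eq_zero (hα : -1 ≤ α) (hx : x ∈ Set.Icc (0 : ℝ) 1) (hy : p α x y = 0) :
    y ∈ Set.Icc (0 : ℝ) 1 := by
  constructor
  · by_contra! h
    exact (p_pos_of_neg hα hx.1 h).ne' hy
  · by_contra! h
    have hroot : p α (1 - x) (1 - y) = 0 := by
      rw [p_one_sub, sub_sub_cancel, hy, neg_zero]
    exact (p_pos_of_neg hα (by linarith [hx.2]) (by linarith)).ne' hroot

theorem p_eq_zero_iff :
    p α x y = 0 ↔
      (y - 1 / 2) ^ 3 + (1 + 2 * α) / 4 * (y - 1 / 2) + -((1 + α) * (x - 1 / 2)) / 2 = 0 := by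
  have hshift : p α x y =
      -2 * ((y - 1 / 2) ^ 3 + (1 + 2 * α) / 4 * (y - 1 / 2) + -((1 + α) * (x - 1 / 2)) / 2) := by
    unfold p; ring
  rw [hshift]
  simp

theorem exists_roots_ne_p_iff (hα₁ : -1 < α) (hα₂ : α < -1 / 2) :
    (∃ y z : ℝ, y ≠ z ∧ p α x y = 0 ∧ p α x z = 0) ↔
      (1 + α) * |x - 1 / 2| ≤ Real.sqrt (-(1 + 2 * α) ^ 3 / 108) := by
  have hshift : (∃ y z : ℝ, y ≠ z ∧ p α x y = 0 ∧ p α x z = 0) ↔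
      ∃ s t : ℝ, s ≠ t ∧ s ^ 3 + (1 + 2 * α) / 4 * s + -((1 + α) * (x - 1 / 2)) / 2 = 0 ∧
        t ^ 3 + (1 + 2 * α) / 4 * t + -((1 + α) * (x - 1 / 2)) / 2 = 0 := by
    simp only [p_eq_zero_iff]
    constructor
    · rintro ⟨y, z, hyz, hy, hz⟩
      exact ⟨y - 1 / 2, z - 1 / 2, sub_left_injective.ne hyz, hy, hz⟩
    · rintro ⟨s, t, hst, hs, ht⟩
      exact ⟨s + 1 / 2, t + 1 / 2, add_left_injective _ |>.ne hst, by simpa using hs,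
        by simpa using ht⟩
  have habs : (1 + α) * |x - 1 / 2| = |(1 + α) * (x - 1 / 2)| := by
    rw [abs_mul, abs_of_pos (by linarith : 0 < 1 + α)]
  have hcube : (1 + 2 * α) ^ 3 < 0 := Odd.pow_neg (by decide) (by linarith)
  rw [hshift, exists_roots_ne_iff_discr_nonneg (by linarith), habs,
    Real.le_sqrt (abs_nonneg _) (by linarith), sq_abs]
  constructor <;> intro h <;> linarith

end MiddleOfThree

theorem stmt_13 (α : ℝ) (hα1 : -1 < α) (hα2 : α < -1 / 2)
    (x : ℝ) (hx : x ∈ Set.Icc (0 : ℝ) 1) :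
    (∀ y : ℝ, p α x y = 0 → y ∈ Set.Icc (0 : ℝ) 1) ∧
    ((∃ y z : ℝ, y ≠ z ∧ p α x y = 0 ∧ p α x z = 0) ↔
      (1 + α) * |x - 1 / 2| ≤ Real.sqrt (-(1 + 2 * α) ^ 3 / 108)) :=
  ⟨fun _ ↦ mem_Icc_of_p_eq_zero hα1.le hx, exists_roots_ne_p_iff hα1 hα2⟩
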